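/- arXiv:2401.09948 — 7 statements merged into one kernel-verified Lean document; each statement's English description precedes it below -/
import Mathlib

section
/- Let a, b > 0, λ > 1, R > 1, and define φ(α) = [R^(λ-1)(1 + √(1+α/b²)) / (1 + √(1 + R^(2λ-2)α/b²))]^((1/(λ-1))·(a/b)) for α ≥ -b²/R^(2λ-2). Then φ is strictly decreasing on [-b²/R^(2λ-2), ∞). -/
/-!
Put `c = R ^ (2λ - 2) > 1` and `p = α / b²`. Since `R ^ (λ - 1)` and the exponent are positive, it
suffices that `p ↦ (1 + √(1 + p)) / (1 + √(1 + c p))` is strictly decreasing on `-1 ≤ c p`.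
Cross-multiplying, this follows from two facts for `p < q`: the ratio `(1 + c p) / (1 + p)`
increases (as `c > 1`), and `√(1 + c p) - √(1 + p)` increases, because
`√(1 + c q) - √(1 + c p) = c (q - p) / (√(1 + c q) + √(1 + c p))` and `√(1 + c p) ≤ c √(1 + p)`.
-/

open Real Set

section

variable {c p q : ℝ}

lemma one_add_pos_of_neg_one_le_mul (hc : 1 < c) (hp : -1 ≤ c * p) : 0 < 1 + p := by
  rcases le_or_gt 0 p with h | h <;> nlinarith

lemma sqrt_one_add_mul_le_mul_sqrt (hc : 1 ≤ c) (hp : -1 ≤ c * p) :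
    √(1 + c * p) ≤ c * √(1 + p) := by
  calc √(1 + c * p) ≤ √(c ^ 2 * (1 + p)) := sqrt_le_sqrt (by nlinarith)
    _ = c * √(1 + p) := by rw [sqrt_mul (sq_nonneg c), sqrt_sq (by linarith)]

lemma sqrt_one_add_mul_mul_sqrt_lt (hc : 1 < c) (hp : -1 ≤ c * p) (hpq : p < q) :
    √(1 + c * p) * √(1 + q) < √(1 + c * q) * √(1 + p) := by
  have hp' := one_add_pos_of_neg_one_le_mul hc hp
  rw [← sqrt_mul (by linarith), ← sqrt_mul (by nlinarith)]
  exact sqrt_lt_sqrt (by nlinarith) (by nlinarith)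

lemma sqrt_one_add_sub_le_sqrt_one_add_mul_sub (hc : 1 < c) (hp : -1 ≤ c * p) (hpq : p < q) :
    √(1 + q) - √(1 + p) ≤ √(1 + c * q) - √(1 + c * p) := by
  have hp' := one_add_pos_of_neg_one_le_mul hc hp
  have hq : 0 < 1 + c * q := by nlinarith
  have hs : √(1 + p) ≤ √(1 + q) := sqrt_le_sqrt (by linarith)
  have htp := sqrt_one_add_mul_le_mul_sqrt hc.le hp
  have htq := sqrt_one_add_mul_le_mul_sqrt hc.le (by nlinarith : -1 ≤ c * q)
  have hsum : 0 < √(1 + c * q) + √(1 + c * p) := by positivity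
  refine le_of_mul_le_mul_right ?_ hsum
  calc (√(1 + q) - √(1 + p)) * (√(1 + c * q) + √(1 + c * p))
      ≤ (√(1 + q) - √(1 + p)) * (c * (√(1 + q) + √(1 + p))) := by gcongr; linarith
    _ = c * ((√(1 + q)) ^ 2 - (√(1 + p)) ^ 2) := by ring
    _ = (√(1 + c * q)) ^ 2 - (√(1 + c * p)) ^ 2 := by
      rw [sq_sqrt hq.le, sq_sqrt (by linarith : 0 ≤ 1 + c * p), sq_sqrt (by linarith : 0 ≤ 1 + q),
        sq_sqrt hp'.le]
      ring
    _ = (√(1 + c * q) - √(1 + c * p)) * (√(1 + c * q) + √(1 + c * p)) := by ring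

lemma one_add_sqrt_div_one_add_sqrt_mul_lt (hc : 1 < c) (hp : -1 ≤ c * p) (hpq : p < q) :
    (1 + √(1 + q)) / (1 + √(1 + c * q)) < (1 + √(1 + p)) / (1 + √(1 + c * p)) := by
  have hprod := sqrt_one_add_mul_mul_sqrt_lt hc hp hpq
  have hdiff := sqrt_one_add_sub_le_sqrt_one_add_mul_sub hc hp hpq
  rw [div_lt_div_iff₀ (by positivity) (by positivity)]
  nlinarith

end

theorem stmt2 (a b lam R : ℝ) (ha : 0 < a) (hb : 0 < b) (hlam : 1 < lam) (hR : 1 < R) :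
    StrictAntiOn (fun α : ℝ =>
        (R ^ (lam - 1) * (1 + Real.sqrt (1 + α / b ^ 2)) /
          (1 + Real.sqrt (1 + R ^ (2 * lam - 2) * α / b ^ 2))) ^ ((1 / (lam - 1)) * (a / b)))
      (Set.Ici (-b ^ 2 / R ^ (2 * lam - 2))) := by
  have hR0 : 0 < R := by linarith
  have hc : 1 < R ^ (2 * lam - 2) := one_lt_rpow hR (by linarith)
  have hexp : 0 < 1 / (lam - 1) * (a / b) := by
    have := sub_pos.2 hlam
    positivity
  intro x hx y _ hxy
  have hcx : -1 ≤ R ^ (2 * lam - 2) * (x / b ^ 2) := by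
    rw [mem_Ici, div_le_iff₀ (by linarith)] at hx
    rw [← mul_div_assoc, le_div_iff₀ (by positivity)]
    linarith
  have hg := one_add_sqrt_div_one_add_sqrt_mul_lt hc hcx (div_lt_div_of_pos_right hxy (by positivity))
  simp only [mul_div_assoc]
  exact rpow_lt_rpow (by positivity) (mul_lt_mul_of_pos_left hg (by positivity)) hexp
end

section
/- Let a, b > 0, λ > 1, R > 1, and r satisfying 1 < r ≤ (R^(λ-1) + √(R^(2λ-2)-1))^((1/(λ-1))·(a/b)). Then there exists a unique α ≥ -b²/R^(2λ-2) such that [R^(λ-1)(1 + √(1+α/b²)) / (1 + √(1 + R^(2λ-2)α/b²))]^((1/(λ-1))·(a/b)) = r. -/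
/-!
With `t = R^(λ-1)`, `p = a / (b (λ-1))` and `x = α / b²`, the equation reads `g x = r^(1/p)` on
`x ≥ -1/t²`, where `g x = t (1 + √(1+x)) / (1 + √(1 + t² x))`. The points
`(u, v) = (√(1+x), √(1+t²x))` run along the hyperbola `v² - 1 = t² (u² - 1)`, on which
`(1 + v) / (1 + u)` strictly increases, so `g` is strictly decreasing. It starts at
`g (-1/t²) = t + √(t² - 1)` and tends to `1` at infinity, so the intermediate value theorem
gives a solution for every `1 < r^(1/p) ≤ t + √(t² - 1)`, and monotonicity makes it unique.
-/

open Real Set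

noncomputable def radialRatio (t x : ℝ) : ℝ :=
  t * (1 + √(1 + x)) / (1 + √(1 + t ^ 2 * x))

section radialRatio

variable {t : ℝ}

lemma radialRatio_pos (ht : 0 < t) (x : ℝ) : 0 < radialRatio t x := by
  unfold radialRatio; positivity

lemma continuous_radialRatio (t : ℝ) : Continuous (radialRatio t) :=
  Continuous.div (by fun_prop) (by fun_prop) fun x => by positivity

lemma radialRatio_neg_one_div_sq (ht : 0 < t) :
    radialRatio t (-1 / t ^ 2) = t + √(t ^ 2 - 1) := by
  have h₁ : 1 + t ^ 2 * (-1 / t ^ 2) = 0 := by field_simp; ring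
  have h₂ : 1 + -1 / t ^ 2 = (t ^ 2 - 1) / t ^ 2 := by field_simp; ring
  rw [radialRatio, h₁, h₂, sqrt_div' _ (sq_nonneg t), sqrt_sq ht.le, sqrt_zero, add_zero, div_one]
  field_simp

lemma le_mul_of_sq_sub_one_eq {u v : ℝ} (ht : 1 ≤ t) (hu : 0 ≤ u)
    (h : v ^ 2 - 1 = t ^ 2 * (u ^ 2 - 1)) : v ≤ t * u :=
  le_of_pow_le_pow_left₀ two_ne_zero (by positivity) (by nlinarith)

lemma cross_mul_lt_of_sq_sub_one_eq {u₁ u₂ v₁ v₂ : ℝ} (ht : 1 < t) (hu₁ : 0 ≤ u₁)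
    (hu : u₁ < u₂) (hv₁ : 0 ≤ v₁) (hv₂ : 0 ≤ v₂)
    (h₁ : v₁ ^ 2 - 1 = t ^ 2 * (u₁ ^ 2 - 1)) (h₂ : v₂ ^ 2 - 1 = t ^ 2 * (u₂ ^ 2 - 1)) :
    (1 + u₂) * (1 + v₁) < (1 + u₁) * (1 + v₂) := by
  have ht2 : 1 < t ^ 2 := by nlinarith
  have hu2 : u₁ ^ 2 < u₂ ^ 2 := by nlinarith
  have hsq : v₂ ^ 2 - v₁ ^ 2 = t ^ 2 * (u₂ - u₁) * (u₁ + u₂) := by linear_combination h₂ - h₁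
  have hv : v₁ < v₂ := lt_of_pow_lt_pow_left₀ 2 hv₂ (by nlinarith)
  have hcross : u₂ * v₁ < u₁ * v₂ := by
    have : (u₁ * v₂) ^ 2 - (u₂ * v₁) ^ 2 = (t ^ 2 - 1) * (u₂ ^ 2 - u₁ ^ 2) := by
      linear_combination u₁ ^ 2 * h₂ - u₂ ^ 2 * h₁
    exact lt_of_pow_lt_pow_left₀ 2 (by positivity) (by nlinarith)
  have hdiff : u₂ - u₁ ≤ v₂ - v₁ := by
    have hv₁' := le_mul_of_sq_sub_one_eq ht.le hu₁ h₁
    have hv₂' := le_mul_of_sq_sub_one_eq ht.le (hu₁.trans hu.le) h₂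
    have hsum : v₁ + v₂ ≤ t ^ 2 * (u₁ + u₂) := by nlinarith
    have : (u₂ - u₁) * (v₁ + v₂) ≤ (v₂ - v₁) * (v₁ + v₂) := by nlinarith
    exact le_of_mul_le_mul_right this (by linarith)
  linarith

lemma one_add_nonneg_of_neg_one_div_sq_le (ht : 1 ≤ t) {x : ℝ} (hx : -1 / t ^ 2 ≤ x) :
    0 ≤ 1 + x ∧ 0 ≤ 1 + t ^ 2 * x := by
  have hx' : -1 ≤ t ^ 2 * x := (div_le_iff₀' (by positivity)).1 hx
  have ht' : 1 ≤ t ^ 2 := one_le_pow₀ ht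
  constructor <;> nlinarith

lemma sq_sqrt_one_add_mul_sub_one (ht : 1 ≤ t) {x : ℝ} (hx : -1 / t ^ 2 ≤ x) :
    √(1 + t ^ 2 * x) ^ 2 - 1 = t ^ 2 * (√(1 + x) ^ 2 - 1) := by
  obtain ⟨h₁, h₂⟩ := one_add_nonneg_of_neg_one_div_sq_le ht hx
  rw [sq_sqrt h₁, sq_sqrt h₂]
  ring

lemma radialRatio_strictAntiOn (ht : 1 < t) :
    StrictAntiOn (radialRatio t) (Ici (-1 / t ^ 2)) := by
  intro x hx y hy hxy
  have hu : √(1 + x) < √(1 + y) :=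
    sqrt_lt_sqrt (one_add_nonneg_of_neg_one_div_sq_le ht.le hx).1 (by linarith)
  have key := cross_mul_lt_of_sq_sub_one_eq ht (sqrt_nonneg _) hu (sqrt_nonneg _)
    (sqrt_nonneg _) (sq_sqrt_one_add_mul_sub_one ht.le hx) (sq_sqrt_one_add_mul_sub_one ht.le hy)
  rw [radialRatio, radialRatio, div_lt_div_iff₀ (by positivity) (by positivity), mul_assoc,
    mul_assoc]
  exact mul_lt_mul_of_pos_left key (by linarith)

lemma radialRatio_sq_sub_one_le (ht : 0 < t) {u : ℝ} (hu : t / 2 ≤ u) :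
    radialRatio t (u ^ 2 - 1) ≤ 1 + 1 / u := by
  have hu₀ : 0 < u := by linarith
  set v := √(1 + t ^ 2 * (u ^ 2 - 1))
  have hv : t * u - 1 ≤ v := by
    refine le_sqrt_of_sq_le ?_
    nlinarith
  rw [radialRatio, add_sub_cancel, sqrt_sq hu₀.le, div_le_iff₀ (by positivity)]
  calc t * (1 + u) = (1 + 1 / u) * (t * u) := by field_simp; ring
    _ ≤ (1 + 1 / u) * (1 + v) := by gcongr; linarith

lemma exists_radialRatio_le (ht : 0 < t) {s : ℝ} (hs : 1 < s) :
    ∃ x, 0 ≤ x ∧ radialRatio t x ≤ s := by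
  set u := max (max 1 (t / 2)) (1 / (s - 1))
  have hu₁ : 1 ≤ u := (le_max_left _ _).trans (le_max_left _ _)
  have hut : t / 2 ≤ u := (le_max_right _ _).trans (le_max_left _ _)
  have hus : 1 / u ≤ s - 1 := (one_div_le (by linarith) (by linarith)).2 (le_max_right _ _)
  exact ⟨u ^ 2 - 1, by nlinarith, (radialRatio_sq_sub_one_le ht hut).trans (by linarith)⟩

lemma existsUnique_radialRatio_eq (ht : 1 < t) {s : ℝ} (hs : 1 < s)
    (hs' : s ≤ t + √(t ^ 2 - 1)) : ∃! x, -1 / t ^ 2 ≤ x ∧ radialRatio t x = s := by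
  obtain ⟨x₁, hx₁, hx₁s⟩ := exists_radialRatio_le (t := t) (by linarith) hs
  have hx₀₁ : -1 / t ^ 2 ≤ x₁ :=
    (div_nonpos_of_nonpos_of_nonneg (by norm_num) (sq_nonneg t)).trans hx₁
  obtain ⟨x, hx, hxs⟩ := intermediate_value_Icc' hx₀₁ (continuous_radialRatio t).continuousOn
    ⟨hx₁s, (radialRatio_neg_one_div_sq (t := t) (by linarith)).symm ▸ hs'⟩
  exact ⟨x, ⟨hx.1, hxs⟩, fun y ⟨hy, hys⟩ =>
    (radialRatio_strictAntiOn ht).injOn hy hx.1 (hys.trans hxs.symm)⟩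

end radialRatio

theorem stmt4 (a b lam R r : ℝ) (ha : 0 < a) (hb : 0 < b) (hlam : 1 < lam) (hR : 1 < R)
    (hr : 1 < r)
    (hrle : r ≤ (R ^ (lam - 1) + Real.sqrt (R ^ (2 * lam - 2) - 1)) ^ ((1 / (lam - 1)) * (a / b))) :
    ∃! α : ℝ, -b ^ 2 / R ^ (2 * lam - 2) ≤ α ∧
      (R ^ (lam - 1) * (1 + Real.sqrt (1 + α / b ^ 2)) /
        (1 + Real.sqrt (1 + R ^ (2 * lam - 2) * α / b ^ 2))) ^ ((1 / (lam - 1)) * (a / b)) = r := by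
  set t := R ^ (lam - 1)
  set p := 1 / (lam - 1) * (a / b)
  have ht : 1 < t := one_lt_rpow hR (by linarith)
  have hp : 0 < p := mul_pos (one_div_pos.2 (by linarith)) (div_pos ha hb)
  have hb2 : 0 < b ^ 2 := by positivity
  have ht2 : R ^ (2 * lam - 2) = t ^ 2 := by
    rw [← rpow_natCast, ← rpow_mul (by linarith)]
    ring_nf
  rw [ht2] at hrle ⊢
  have hs : 1 < r ^ p⁻¹ := one_lt_rpow hr (inv_pos.2 hp)
  have hs' : r ^ p⁻¹ ≤ t + √(t ^ 2 - 1) :=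
    (rpow_inv_le_iff_of_pos (by linarith) (by positivity) hp).2 hrle
  refine (Equiv.divRight₀ (b ^ 2) hb2.ne').existsUnique_congr (fun α => ?_) |>.2
    (existsUnique_radialRatio_eq ht hs hs')
  rw [Equiv.divRight₀_apply, le_div_iff₀ hb2, div_mul_eq_mul_div, neg_one_mul,
    eq_rpow_inv (radialRatio_pos (by linarith) _).le (by linarith) hp.ne', radialRatio,
    ← mul_div_assoc]
end

section
/- Let a, b > 0, λ > 1, R > 1, α = -b²/R^(2λ-2). Then exp((a/((1-λ)b)) · ∫ from 1 to R of d(b/s^(λ-1))/√((b/s^(λ-1))² + α)) = (R^(λ-1) + √(R^(2(λ-1)) - 1))^((1/(λ-1))·(a/b)). Equivalently, ∫ from 1 to R of a/√(α s^(2λ) + b² s²) ds = (a/((λ-1)b)) · log(R^(λ-1) + √(R^(2(λ-1)) - 1)). -/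
/-!
With `t = (R / s) ^ (λ - 1)` the radicand becomes `b² s² (t² - 1) / t²`, so
`-(a / ((λ - 1) b)) · arcosh ((R / s) ^ (λ - 1))` is an antiderivative of the integrand on `(1, R)`.
The integrand is nonnegative, hence integrable despite the singularity at `s = R`, and the
fundamental theorem of calculus gives the value, using `arcosh t = log (t + √(t² - 1))`.
-/

open Real Set intervalIntegral

lemma hasDerivAt_div_rpow {R m s : ℝ} (hR : 0 < R) (hs : 0 < s) :
    HasDerivAt (fun x => (R / x) ^ m) (-(m * (R / s) ^ m / s)) s := by
  have hRs : R / s ≠ 0 := (div_pos hR hs).ne'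
  convert ((hasDerivAt_inv hs.ne').const_mul R).rpow_const (p := m) (Or.inl hRs) using 1
  · simp only [div_eq_mul_inv]
  · rw [← div_eq_mul_inv, rpow_sub_one hRs]
    field_simp

lemma hasDerivAt_arcosh_div_rpow {R m s : ℝ} (hm : 0 < m) (hs : 0 < s) (hsR : s < R) :
    HasDerivAt (fun x => arcosh ((R / x) ^ m))
      (-(m * (R / s) ^ m / (s * √(((R / s) ^ m) ^ 2 - 1)))) s := by
  have ht : 1 < (R / s) ^ m := one_lt_rpow ((one_lt_div hs).mpr hsR) hm
  refine ((hasDerivAt_arcosh ht).comp s (hasDerivAt_div_rpow (hs.trans hsR) hs)).congr_deriv ?_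
  field_simp

lemma continuousOn_arcosh_div_rpow {R m : ℝ} (hm : 0 ≤ m) :
    ContinuousOn (fun x => arcosh ((R / x) ^ m)) (Ioc 0 R) := by
  refine continuousOn_arcosh.comp ?_ fun x hx => one_le_rpow ((one_le_div hx.1).mpr hx.2) hm
  exact (continuousOn_const.div continuousOn_id fun x hx => hx.1.ne').rpow_const
    fun _ _ => Or.inr hm

lemma neg_div_rpow_mul_rpow_add_sq {b R s lam : ℝ} (hR : 0 < R) (hs : 0 < s) :
    -b ^ 2 / R ^ (2 * lam - 2) * s ^ (2 * lam) + b ^ 2 * s ^ 2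
      = b ^ 2 * s ^ 2 * (((R / s) ^ (lam - 1)) ^ 2 - 1) / ((R / s) ^ (lam - 1)) ^ 2 := by
  have hsq : ((R / s) ^ (lam - 1)) ^ 2 = R ^ (2 * lam - 2) / s ^ (2 * lam - 2) := by
    rw [← rpow_mul_natCast (div_pos hR hs).le, div_rpow hR.le hs.le]
    push_cast; ring_nf
  have hs2 : s ^ (2 * lam) = s ^ (2 * lam - 2) * s ^ 2 := by
    rw [← rpow_natCast, ← rpow_add hs]; push_cast; ring_nf
  have : 0 < R ^ (2 * lam - 2) := rpow_pos_of_pos hR _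
  have : 0 < s ^ (2 * lam - 2) := rpow_pos_of_pos hs _
  rw [hsq, hs2]
  field_simp
  ring

lemma sqrt_neg_div_rpow_mul_rpow_add {b R s lam : ℝ} (hb : 0 ≤ b) (hR : 0 < R) (hs : 0 < s) :
    √(-b ^ 2 / R ^ (2 * lam - 2) * s ^ (2 * lam) + b ^ 2 * s ^ 2)
      = b * s * √(((R / s) ^ (lam - 1)) ^ 2 - 1) / (R / s) ^ (lam - 1) := by
  have ht : 0 < (R / s) ^ (lam - 1) := rpow_pos_of_pos (div_pos hR hs) _
  rw [neg_div_rpow_mul_rpow_add_sq hR hs, sqrt_div' _ (sq_nonneg _), sqrt_sq ht.le,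
    sqrt_mul (by positivity), sqrt_mul (sq_nonneg _), sqrt_sq hb, sqrt_sq hs.le]

theorem stmt5 (a b lam R α : ℝ) (ha : 0 < a) (hb : 0 < b) (hlam : 1 < lam) (hR : 1 < R)
    (hα : α = -b ^ 2 / R ^ (2 * lam - 2)) :
    ∫ s in (1:ℝ)..R, a / Real.sqrt (α * s ^ (2 * lam) + b ^ 2 * s ^ 2)
      = (a / ((lam - 1) * b)) * Real.log (R ^ (lam - 1) + Real.sqrt (R ^ (2 * (lam - 1)) - 1)) := by
  subst hα
  have hm : 0 < lam - 1 := sub_pos.mpr hlam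
  set F : ℝ → ℝ := fun s => -(a / ((lam - 1) * b)) * arcosh ((R / s) ^ (lam - 1))
  have hcont : ContinuousOn F (Icc 1 R) :=
    continuousOn_const.mul <| (continuousOn_arcosh_div_rpow hm.le).mono
      fun s hs => ⟨one_pos.trans_le hs.1, hs.2⟩
  have hderiv : ∀ s ∈ Ioo 1 R,
      HasDerivAt F (a / √(-b ^ 2 / R ^ (2 * lam - 2) * s ^ (2 * lam) + b ^ 2 * s ^ 2)) s := by
    intro s hs
    have hs0 : 0 < s := by linarith [hs.1]
    have ht : 1 < (R / s) ^ (lam - 1) := one_lt_rpow ((one_lt_div hs0).mpr hs.2) hm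
    have hq : 0 < √(((R / s) ^ (lam - 1)) ^ 2 - 1) := sqrt_pos.mpr (by nlinarith)
    refine ((hasDerivAt_arcosh_div_rpow hm hs0 hs.2).const_mul _).congr_deriv ?_
    rw [sqrt_neg_div_rpow_mul_rpow_add hb.le (by linarith) hs0]
    field_simp
  have hint := (intervalIntegrable_iff_integrableOn_Ioc_of_le hR.le).mpr <|
    integrableOn_deriv_of_nonneg hcont hderiv fun _ _ => div_nonneg ha.le (sqrt_nonneg _)
  rw [integral_eq_sub_of_hasDerivAt_of_le hR.le hcont hderiv hint]
  simp only [F, div_self (by linarith : R ≠ 0), one_rpow, arcosh_zero, div_one, mul_zero,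
    sub_neg_eq_add, neg_mul, neg_zero, zero_add]
  rw [arcosh, mul_comm 2 (lam - 1), rpow_mul (by linarith), rpow_two]
end

section
/- Let a, b > 0, λ ≠ 1, and α with 1 + α/b² ≥ 0. Define H(t) = 2^(1/(λ-1)) (1 + √(1+α/b²))^(1/(λ-1)) t^(b/a) / [(1 + √(1+α/b²))² - t^(2(λ-1)b/a) · α/b²]^(1/(λ-1)) for t > 0 on an interval where the bracketed denominator is positive. Then H satisfies the ODE a² t² H(t) H''(t) + a² t H(t) H'(t) + (λ-1) b² H(t)² = λ a² t² H'(t)². -/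
/-!
Write `β = b/a`, `γ = 2(λ-1)β`, `C = (1 + √(1+α/b²))²`, `k = α/b²`, so that
`H = c t^β (C - k t^γ)^(-1/(λ-1))` with a constant `c`. Its Euler logarithmic derivative `v = t H'/H` equals
`β (C + k t^γ)/(C - k t^γ)` and solves the Riccati equation `t v' = (λ-1)(v² - β²)`. Since
`H'' = H (v² - v + t v')/t²`, dividing the Euler–Lagrange equation by `H²` leaves exactly
this Riccati equation.
-/

open Filter Topology

theorem deriv_deriv_of_hasDerivAt_mul_div {H v : ℝ → ℝ} {t v' : ℝ} (ht : t ≠ 0)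
    (hH : ∀ᶠ x in 𝓝 t, HasDerivAt H (H x * v x / x) x) (hv : HasDerivAt v v' t) :
    deriv (deriv H) t = H t * (v t ^ 2 - v t + t * v') / t ^ 2 := by
  have hderiv : deriv H =ᶠ[𝓝 t] fun x => H x * v x / x :=
    hH.mono fun x hx => hx.deriv
  have hsecond : HasDerivAt (fun x => H x * v x / x)
      (((H t * v t / t * v t + H t * v') * t - H t * v t * 1) / t ^ 2) t :=
    (hH.self_of_nhds.mul hv).div (hasDerivAt_id' t) ht
  rw [hderiv.deriv_eq, hsecond.deriv]
  field_simp
  ring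

theorem hasDerivAt_mul_rpow_div_rpow {c β γ μ C k t : ℝ} (ht : 0 < t)
    (hD : 0 < C - k * t ^ γ) (hμγ : μ * γ = 2 * β) :
    HasDerivAt (fun x => c * x ^ β / (C - k * x ^ γ) ^ μ)
      (c * t ^ β / (C - k * t ^ γ) ^ μ * (β * (C + k * t ^ γ) / (C - k * t ^ γ)) / t) t := by
  have hnum : HasDerivAt (fun x => c * x ^ β) (c * (β * t ^ (β - 1))) t :=
    (Real.hasDerivAt_rpow_const (Or.inl ht.ne')).const_mul c
  have hden : HasDerivAt (fun x => (C - k * x ^ γ) ^ μ)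
      (-(k * (γ * t ^ (γ - 1))) * μ * (C - k * t ^ γ) ^ (μ - 1)) t :=
    (((Real.hasDerivAt_rpow_const (Or.inl ht.ne')).const_mul k).const_sub C).rpow_const
      (Or.inl hD.ne')
  have hDμ := (Real.rpow_pos_of_pos hD μ).ne'
  refine (hnum.div hden hDμ).congr_deriv ?_
  rw [Real.rpow_sub_one ht.ne', Real.rpow_sub_one ht.ne', Real.rpow_sub_one hD.ne']
  field_simp
  linear_combination c * k * t ^ γ * hμγ

theorem hasDerivAt_riccati_solution {β m C k t : ℝ} (ht : 0 < t)
    (hD : C - k * t ^ (2 * m * β) ≠ 0) :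
    HasDerivAt (fun x => β * (C + k * x ^ (2 * m * β)) / (C - k * x ^ (2 * m * β)))
      (m * ((β * (C + k * t ^ (2 * m * β)) / (C - k * t ^ (2 * m * β))) ^ 2 - β ^ 2) / t) t := by
  have hpow := Real.hasDerivAt_rpow_const (p := 2 * m * β) (Or.inl ht.ne')
  refine ((((hpow.const_mul k).const_add C).const_mul β).div
    ((hpow.const_mul k).const_sub C) hD).congr_deriv ?_
  rw [Real.rpow_sub_one ht.ne']
  generalize t ^ (2 * m * β) = X at hD ⊢
  field_simp
  ring

theorem stmt6_general (a b lam α t₁ t₂ : ℝ) (ha : 0 < a) (hlam : lam ≠ 1)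
    (H : ℝ → ℝ)
    (hH : ∀ t : ℝ, H t = (2 : ℝ) ^ ((1 : ℝ) / (lam - 1)) *
        (1 + Real.sqrt (1 + α / b ^ 2)) ^ ((1 : ℝ) / (lam - 1)) * t ^ (b / a) /
        ((1 + Real.sqrt (1 + α / b ^ 2)) ^ 2 - t ^ (2 * (lam - 1) * b / a) * α / b ^ 2)
          ^ ((1 : ℝ) / (lam - 1)))
    (hsub : Set.Ioo t₁ t₂ ⊆ Set.Ioi (0 : ℝ))
    (hden : ∀ t ∈ Set.Ioo t₁ t₂,
      0 < (1 + Real.sqrt (1 + α / b ^ 2)) ^ 2 - t ^ (2 * (lam - 1) * b / a) * α / b ^ 2) :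
    ∀ t ∈ Set.Ioo t₁ t₂,
      a ^ 2 * t ^ 2 * H t * deriv (deriv H) t + a ^ 2 * t * H t * deriv H t
        + (lam - 1) * b ^ 2 * (H t) ^ 2 = lam * a ^ 2 * t ^ 2 * (deriv H t) ^ 2 := by
  set β := b / a with hβ
  set C := (1 + Real.sqrt (1 + α / b ^ 2)) ^ 2
  set k := α / b ^ 2
  have hγ : 2 * (lam - 1) * b / a = 2 * (lam - 1) * β := mul_div_assoc _ _ _
  have hμγ : 1 / (lam - 1) * (2 * (lam - 1) * β) = 2 * β := by
    field_simp [sub_ne_zero.mpr hlam]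
  have hk : ∀ x : ℝ, x ^ (2 * (lam - 1) * b / a) * α / b ^ 2 = k * x ^ (2 * (lam - 1) * β) :=
    fun x => by rw [hγ]; ring
  have hD : ∀ x ∈ Set.Ioo t₁ t₂, 0 < C - k * x ^ (2 * (lam - 1) * β) :=
    fun x hx => hk x ▸ hden x hx
  set v : ℝ → ℝ := fun x =>
    β * (C + k * x ^ (2 * (lam - 1) * β)) / (C - k * x ^ (2 * (lam - 1) * β))
  have hH' : ∀ x ∈ Set.Ioo t₁ t₂, HasDerivAt H (H x * v x / x) x := by
    intro x hx
    rw [funext fun y => (hH y).trans (by rw [hk])]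
    exact hasDerivAt_mul_rpow_div_rpow (hsub hx) (hD x hx) hμγ
  intro t ht
  have ht0 : 0 < t := hsub ht
  have hv : HasDerivAt v ((lam - 1) * (v t ^ 2 - β ^ 2) / t) t :=
    hasDerivAt_riccati_solution ht0 (hD t ht).ne'
  rw [(hH' t ht).deriv, deriv_deriv_of_hasDerivAt_mul_div ht0.ne'
    (eventually_of_mem (isOpen_Ioo.mem_nhds ht) hH') hv, hβ]
  generalize v t = w
  field_simp
  ring

theorem stmt6 (a b lam α t₁ t₂ : ℝ) (ha : 0 < a) (hb : 0 < b) (hlam : lam ≠ 1)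
    (hα : 0 ≤ 1 + α / b ^ 2)
    (H : ℝ → ℝ)
    (hH : ∀ t : ℝ, H t = (2 : ℝ) ^ ((1 : ℝ) / (lam - 1)) *
        (1 + Real.sqrt (1 + α / b ^ 2)) ^ ((1 : ℝ) / (lam - 1)) * t ^ (b / a) /
        ((1 + Real.sqrt (1 + α / b ^ 2)) ^ 2 - t ^ (2 * (lam - 1) * b / a) * α / b ^ 2)
          ^ ((1 : ℝ) / (lam - 1)))
    (hsub : Set.Ioo t₁ t₂ ⊆ Set.Ioi (0 : ℝ))
    (hden : ∀ t ∈ Set.Ioo t₁ t₂,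
      0 < (1 + Real.sqrt (1 + α / b ^ 2)) ^ 2 - t ^ (2 * (lam - 1) * b / a) * α / b ^ 2) :
    ∀ t ∈ Set.Ioo t₁ t₂,
      a ^ 2 * t ^ 2 * H t * deriv (deriv H) t + a ^ 2 * t * H t * deriv H t
        + (lam - 1) * b ^ 2 * (H t) ^ 2 = lam * a ^ 2 * t ^ 2 * (deriv H t) ^ 2 :=
  stmt6_general a b lam α t₁ t₂ ha hlam H hH hsub hden
end

section
/- Let h : A₁ → A₂ be a C¹ homeomorphism between annuli A₁ = {1 ≤ |z| ≤ r}, A₂ = {1 ≤ |w| ≤ R} with |h| = 1 on |z| = 1 and |h| = R on |z| = r. Then ∬_{A₁} (|h|_N)²/|h(z)|² dz ≥ 2π (log R)²/(log r), where |h|_N = ∂|h|/∂t is the normal derivative of |h| at z = t e^(iθ). -/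
/-!
Put `L = log |h|`. On the open annulus `|h|_N / |h|` is the radial derivative `L_N` of `L`, and
`L = 0` on `|z| = 1`, `L = log R` on `|z| = r`. In polar coordinates `L_N / |z| dz = L_N dt dθ`,
so the fundamental theorem of calculus along each ray gives `∬ L_N / |z| = 2π log R`, while
`∬ 1 / |z|² = 2π log r`. Cauchy–Schwarz then gives `(2π log R)² ≤ 2π log r · ∬ L_N²`.
-/

open Set MeasureTheory Real

def closedAnnulus (a b : ℝ) : Set ℂ := (‖·‖) ⁻¹' Icc a b

def openAnnulus (a b : ℝ) : Set ℂ := (‖·‖) ⁻¹' Ioo a b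

noncomputable def radialDeriv (f : ℂ → ℝ) (z : ℂ) : ℝ :=
  fderiv ℝ f z (z / (‖z‖ : ℂ))

theorem IsCompact.exists_bound_norm_fderiv {E F : Type*} [NormedAddCommGroup E]
    [NormedSpace ℝ E] [NormedAddCommGroup F] [NormedSpace ℝ F] {f : E → F} {s : Set E}
    (hs : IsCompact s) (hu : UniqueDiffOn ℝ s) (hf : ContDiffOn ℝ 1 f s) :
    ∃ C, ∀ x ∈ interior s, ‖fderiv ℝ f x‖ ≤ C := by
  obtain ⟨C, hC⟩ := hs.exists_bound_of_continuousOn (hf.continuousOn_fderivWithin hu le_rfl)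
  refine ⟨C, fun x hx => ?_⟩
  rw [← fderivWithin_of_mem_nhds (mem_interior_iff_mem_nhds.1 hx)]
  exact hC x (interior_subset hx)

theorem Complex.continuous_polarCoord_symm : Continuous Complex.polarCoord.symm := by
  simp_rw [funext Complex.polarCoord_symm_apply]
  fun_prop

theorem Complex.polarCoord_symm_eq_smul (t θ : ℝ) :
    Complex.polarCoord.symm (t, θ) = t • Complex.polarCoord.symm (1, θ) := by
  simp [Complex.real_smul, mul_add]

theorem integral_Ioo_neg_pi_pi_const (c : ℝ) : ∫ _ in Ioo (-π) π, c = 2 * π * c := by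
  rw [setIntegral_const, Real.volume_real_Ioo_of_le (by linarith [pi_pos]), smul_eq_mul]
  ring

section Annulus

variable {a b : ℝ}

theorem isCompact_closedAnnulus : IsCompact (closedAnnulus a b) :=
  (isCompact_closedBall (0 : ℂ) b).of_isClosed_subset (isClosed_Icc.preimage continuous_norm)
    fun _ hz => mem_closedBall_zero_iff.2 hz.2

theorem isOpen_openAnnulus : IsOpen (openAnnulus a b) :=
  isOpen_Ioo.preimage continuous_norm

theorem openAnnulus_subset_closedAnnulus : openAnnulus a b ⊆ closedAnnulus a b :=
  preimage_mono Ioo_subset_Icc_self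

theorem openAnnulus_subset_interior_closedAnnulus :
    openAnnulus a b ⊆ interior (closedAnnulus a b) :=
  interior_maximal openAnnulus_subset_closedAnnulus isOpen_openAnnulus

theorem volume_openAnnulus_lt_top : volume (openAnnulus a b) < ⊤ :=
  (measure_mono fun _ hz => mem_ball_zero_iff.2 hz.2).trans_lt measure_ball_lt_top

theorem closedAnnulus_ae_eq_openAnnulus : closedAnnulus a b =ᵐ[volume] openAnnulus a b := by
  refine ae_eq_set.2 ⟨measure_mono_null (t := Metric.sphere 0 a ∪ Metric.sphere 0 b) ?_
    (measure_union_null (Measure.addHaar_sphere _ _ _) (Measure.addHaar_sphere _ _ _)), ?_⟩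
  · rintro z ⟨⟨hza, hzb⟩, hz⟩
    simp only [openAnnulus, mem_preimage, mem_Ioo, not_and_or, not_lt] at hz
    simp only [mem_union, mem_sphere_zero_iff_norm]
    rcases hz with hz | hz
    · exact Or.inl (le_antisymm hz hza)
    · exact Or.inr (le_antisymm hzb hz)
  · rw [sdiff_eq_empty.2 openAnnulus_subset_closedAnnulus, measure_empty]

theorem uniqueDiffOn_closedAnnulus (ha : 0 < a) (hab : a < b) :
    UniqueDiffOn ℝ (closedAnnulus a b) := by
  rintro x ⟨hxa, hxb⟩
  dsimp only at hxa hxb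
  have hx : 0 < ‖x‖ := ha.trans_le hxa
  -- a closed ball of radius `(b - a) / 2` through `x`, centred on the middle circle
  set c : ℂ := (((a + b) / 2 / ‖x‖ : ℝ) : ℂ) * x
  have hc : ‖c‖ = (a + b) / 2 := by
    rw [norm_mul, Complex.norm_real, norm_of_nonneg (div_nonneg (by linarith) hx.le),
      div_mul_cancel₀ _ hx.ne']
  have hball : Metric.closedBall c ((b - a) / 2) ⊆ closedAnnulus a b := fun w hw => by
    have := abs_le.1 ((abs_norm_sub_norm_le w c).trans (mem_closedBall_iff_norm.1 hw))
    constructor <;> linarith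
  have hxc : x ∈ Metric.closedBall c ((b - a) / 2) := by
    rw [mem_closedBall_iff_norm, show x - c = ((1 - (a + b) / 2 / ‖x‖ : ℝ) : ℂ) * x by
      simp only [c]; push_cast; ring, norm_mul, Complex.norm_real, Real.norm_eq_abs,
      ← abs_of_pos hx, ← abs_mul, abs_of_pos hx, sub_mul, one_mul, div_mul_cancel₀ _ hx.ne',
      abs_le]
    constructor <;> linarith
  exact (uniqueDiffWithinAt_convex (convex_closedBall c _)
    (by rw [interior_closedBall c (by linarith)]; exact ⟨c, Metric.mem_ball_self (by linarith)⟩)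
    (subset_closure hxc)).mono hball

theorem integrableOn_openAnnulus_of_abs_le {F : ℂ → ℝ} (hF : Measurable F) {M : ℝ}
    (hFM : ∀ z ∈ openAnnulus a b, |F z| ≤ M) : IntegrableOn F (openAnnulus a b) :=
  Measure.integrableOn_of_bounded volume_openAnnulus_lt_top.ne hF.aestronglyMeasurable
    ((ae_restrict_iff' isOpen_openAnnulus.measurableSet).2 (.of_forall hFM))

theorem abs_inv_norm_sq_le (ha : 0 < a) :
    ∀ z ∈ openAnnulus a b, |(‖z‖ ^ 2)⁻¹| ≤ (a ^ 2)⁻¹ := fun z hz => by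
  rw [abs_of_pos (by have := ha.trans hz.1; positivity)]
  exact inv_anti₀ (by positivity) (pow_le_pow_left₀ ha.le hz.1.le 2)

theorem integral_openAnnulus_eq_integral_polar (ha : 0 ≤ a) (hab : a ≤ b)
    {F : ℂ → ℝ} (hF : Measurable F) {M : ℝ} (hFM : ∀ z ∈ openAnnulus a b, |F z| ≤ M) :
    ∫ z in openAnnulus a b, F z =
      ∫ θ in Ioo (-π) π, ∫ t in a..b, t * F (Complex.polarCoord.symm (t, θ)) := by
  set S : Set (ℝ × ℝ) := Ioo a b ×ˢ Ioo (-π) π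
  have hS : S ⊆ polarCoord.target := fun p hp => ⟨ha.trans_lt hp.1.1, hp.2⟩
  have hmem : ∀ p ∈ polarCoord.target, Complex.polarCoord.symm p ∈ openAnnulus a b ↔ p ∈ S :=
    fun p ⟨hp1, hp2⟩ => by
      simp [openAnnulus, S, abs_of_pos (show 0 < p.1 from hp1),
        show p.2 ∈ Ioo (-π) π from hp2]
  have hint : IntegrableOn (fun q : ℝ × ℝ => q.2 * F (Complex.polarCoord.symm q.swap))
      (Ioo (-π) π ×ˢ Ioo a b) := by
    refine Measure.integrableOn_of_bounded (M := b * M)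
      (by simp [Measure.volume_eq_prod, Measure.prod_prod, ENNReal.mul_eq_top])
      (measurable_snd.mul (hF.comp (Complex.continuous_polarCoord_symm.measurable.comp
        measurable_swap))).aestronglyMeasurable ?_
    rw [ae_restrict_iff' (measurableSet_Ioo.prod measurableSet_Ioo)]
    refine .of_forall fun q ⟨_, ht⟩ => ?_
    have ht0 : 0 < q.2 := ha.trans_lt ht.1
    have hz : Complex.polarCoord.symm q.swap ∈ openAnnulus a b := by
      simpa [openAnnulus, abs_of_pos ht0] using ht
    rw [norm_mul, Real.norm_eq_abs, Real.norm_eq_abs, abs_of_pos ht0]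
    exact mul_le_mul ht.2.le (hFM _ hz) (abs_nonneg _) (ha.trans hab)
  calc ∫ z in openAnnulus a b, F z
      = ∫ z, (openAnnulus a b).indicator F z :=
        (integral_indicator isOpen_openAnnulus.measurableSet).symm
    _ = ∫ p in polarCoord.target,
          p.1 • (openAnnulus a b).indicator F (Complex.polarCoord.symm p) :=
        (Complex.integral_comp_polarCoord_symm _).symm
    _ = ∫ p in polarCoord.target,
          S.indicator (fun p => p.1 * F (Complex.polarCoord.symm p)) p := by
        refine setIntegral_congr_fun polarCoord.open_target.measurableSet fun p hp => ?_
        by_cases hpS : p ∈ S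
        · rw [indicator_of_mem hpS, indicator_of_mem ((hmem p hp).2 hpS), smul_eq_mul]
        · rw [indicator_of_notMem hpS, indicator_of_notMem (mt (hmem p hp).1 hpS), smul_zero]
    _ = ∫ p in S, p.1 * F (Complex.polarCoord.symm p) := by
        rw [setIntegral_indicator (measurableSet_Ioo.prod measurableSet_Ioo),
          inter_eq_right.2 hS]
    _ = ∫ q in Ioo (-π) π ×ˢ Ioo a b, q.2 * F (Complex.polarCoord.symm q.swap) :=
        (setIntegral_prod_swap _ _ _).symm
    _ = ∫ θ in Ioo (-π) π, ∫ t in Ioo a b, t * F (Complex.polarCoord.symm (t, θ)) :=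
        setIntegral_prod _ hint
    _ = _ := by simp_rw [intervalIntegral.integral_of_le hab, integral_Ioc_eq_integral_Ioo]

theorem integral_inv_norm_sq_openAnnulus (ha : 0 < a) (hab : a ≤ b) :
    ∫ z in openAnnulus a b, (‖z‖ ^ 2)⁻¹ = 2 * π * log (b / a) := by
  have hray (θ : ℝ) :
      ∫ t in a..b, t * (‖Complex.polarCoord.symm (t, θ)‖ ^ 2)⁻¹ = log (b / a) := by
    rw [← integral_inv_of_pos ha (ha.trans_le hab)]
    refine intervalIntegral.integral_congr fun t ht => ?_
    have ht0 : 0 < t := ha.trans_le (uIcc_of_le hab ▸ ht).1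
    simp only [Complex.norm_polarCoord_symm, abs_of_pos ht0]
    field_simp
  rw [integral_openAnnulus_eq_integral_polar ha.le hab (by fun_prop) (abs_inv_norm_sq_le ha)]
  simp_rw [hray, integral_Ioo_neg_pi_pi_const]

end Annulus

section RadialDerivative

variable {a b : ℝ} {L : ℂ → ℝ}

theorem measurable_radialDeriv (f : ℂ → ℝ) : Measurable (radialDeriv f) :=
  isBoundedBilinearMap_apply.continuous.measurable.comp
    ((measurable_fderiv ℝ f).prodMk (by fun_prop))

theorem abs_radialDeriv_le (f : ℂ → ℝ) (z : ℂ) : |radialDeriv f z| ≤ ‖fderiv ℝ f z‖ := by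
  refine ((fderiv ℝ f z).le_opNorm _).trans (mul_le_of_le_one_right (norm_nonneg _) ?_)
  rw [norm_div, Complex.norm_real, norm_norm]
  exact div_self_le_one _

theorem radialDeriv_smul (f : ℂ → ℝ) {t : ℝ} (ht : 0 < t) {e : ℂ} (he : ‖e‖ = 1) :
    radialDeriv f (t • e) = fderiv ℝ f (t • e) e := by
  rw [radialDeriv, norm_smul, he, mul_one, Real.norm_of_nonneg ht.le, Complex.real_smul,
    mul_div_cancel_left₀ _ (by exact_mod_cast ht.ne')]

theorem abs_radialDeriv_div_norm_le (ha : 0 < a) {C : ℝ}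
    (hC : ∀ z ∈ openAnnulus a b, ‖fderiv ℝ L z‖ ≤ C) :
    ∀ z ∈ openAnnulus a b, |radialDeriv L z / ‖z‖| ≤ C / a := fun z hz => by
  have hD := (abs_radialDeriv_le L z).trans (hC z hz)
  rw [abs_div, abs_norm]
  exact div_le_div₀ ((abs_nonneg _).trans hD) hD ha hz.1.le

theorem exists_bound_fderiv_openAnnulus (ha : 0 < a) (hab : a < b)
    (hL : ContDiffOn ℝ 1 L (closedAnnulus a b)) :
    ∃ C, ∀ z ∈ openAnnulus a b, ‖fderiv ℝ L z‖ ≤ C :=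
  let ⟨C, hC⟩ :=
    isCompact_closedAnnulus.exists_bound_norm_fderiv (uniqueDiffOn_closedAnnulus ha hab) hL
  ⟨C, fun z hz => hC z (openAnnulus_subset_interior_closedAnnulus hz)⟩

theorem integral_fderiv_apply_ray (ha : 0 < a) (hab : a < b)
    (hL : ContDiffOn ℝ 1 L (closedAnnulus a b)) {e : ℂ} (he : ‖e‖ = 1) :
    ∫ t in a..b, fderiv ℝ L (t • e) e = L (b • e) - L (a • e) := by
  obtain ⟨C, hC⟩ := exists_bound_fderiv_openAnnulus ha hab hL
  have hnorm {t : ℝ} (ht : 0 ≤ t) : ‖t • e‖ = t := by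
    rw [norm_smul, he, mul_one, Real.norm_of_nonneg ht]
  have hray : MapsTo (· • e) (Icc a b) (closedAnnulus a b) := fun t ht => by
    show ‖t • e‖ ∈ Icc a b
    rwa [hnorm (ha.le.trans ht.1)]
  have hray' : MapsTo (· • e) (Ioo a b) (openAnnulus a b) := fun t ht => by
    show ‖t • e‖ ∈ Ioo a b
    rwa [hnorm (ha.le.trans ht.1.le)]
  refine intervalIntegral.integral_eq_sub_of_hasDerivAt_of_le hab.le
    (hL.continuousOn.comp (by fun_prop) hray) (fun t ht => ?_) ?_
  · have hdiff : DifferentiableAt ℝ L (t • e) :=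
      (hL.differentiableOn one_ne_zero).differentiableAt (Filter.mem_of_superset
        (isOpen_openAnnulus.mem_nhds (hray' ht)) openAnnulus_subset_closedAnnulus)
    simpa using hdiff.hasFDerivAt.comp_hasDerivAt t ((hasDerivAt_id t).smul_const e)
  · rw [intervalIntegrable_iff_integrableOn_Ioo_of_le hab.le]
    refine Measure.integrableOn_of_bounded (M := C) measure_Ioo_lt_top.ne
      ((measurable_fderiv_apply_const ℝ L e).comp (by fun_prop)).aestronglyMeasurable ?_
    rw [ae_restrict_iff' measurableSet_Ioo]
    refine .of_forall fun t ht => ?_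
    simpa [he] using
      ((fderiv ℝ L (t • e)).le_opNorm e).trans (by simpa [he] using hC _ (hray' ht))

theorem integral_radialDeriv_div_norm (ha : 0 < a) (hab : a < b)
    (hL : ContDiffOn ℝ 1 L (closedAnnulus a b)) {α β : ℝ}
    (hα : ∀ z : ℂ, ‖z‖ = a → L z = α) (hβ : ∀ z : ℂ, ‖z‖ = b → L z = β) :
    ∫ z in openAnnulus a b, radialDeriv L z / ‖z‖ = 2 * π * (β - α) := by
  obtain ⟨C, hC⟩ := exists_bound_fderiv_openAnnulus ha hab hL
  have hray (θ : ℝ) :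
      ∫ t in a..b, t * (radialDeriv L (Complex.polarCoord.symm (t, θ)) /
        ‖Complex.polarCoord.symm (t, θ)‖) = β - α := by
    set e := Complex.polarCoord.symm (1, θ)
    have he : ‖e‖ = 1 := by simp [e]
    have hsmul (t : ℝ) : Complex.polarCoord.symm (t, θ) = t • e :=
      Complex.polarCoord_symm_eq_smul t θ
    have hnorm {t : ℝ} (ht : 0 ≤ t) : ‖t • e‖ = t := by
      rw [norm_smul, he, mul_one, Real.norm_of_nonneg ht]
    rw [← hβ _ (hnorm (ha.trans hab).le), ← hα _ (hnorm ha.le),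
      ← integral_fderiv_apply_ray ha hab hL he]
    refine intervalIntegral.integral_congr fun t ht => ?_
    have ht0 : 0 < t := ha.trans_le (uIcc_of_le hab.le ▸ ht).1
    rw [hsmul, radialDeriv_smul L ht0 he, hnorm ht0.le, mul_div_cancel₀ _ ht0.ne']
  rw [integral_openAnnulus_eq_integral_polar (F := fun z => radialDeriv L z / ‖z‖) ha.le
    hab.le ((measurable_radialDeriv L).div (by fun_prop)) (abs_radialDeriv_div_norm_le ha hC)]
  simp_rw [hray, integral_Ioo_neg_pi_pi_const]

theorem le_integral_radialDeriv_sq (ha : 0 < a) (hab : a < b)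
    (hL : ContDiffOn ℝ 1 L (closedAnnulus a b)) {α β : ℝ}
    (hα : ∀ z : ℂ, ‖z‖ = a → L z = α) (hβ : ∀ z : ℂ, ‖z‖ = b → L z = β) :
    2 * π * (β - α) ^ 2 / log (b / a) ≤ ∫ z in openAnnulus a b, radialDeriv L z ^ 2 := by
  obtain ⟨C, hC⟩ := exists_bound_fderiv_openAnnulus ha hab hL
  have hcross : IntegrableOn (fun z => radialDeriv L z / ‖z‖) (openAnnulus a b) :=
    integrableOn_openAnnulus_of_abs_le ((measurable_radialDeriv L).div (by fun_prop))
      (abs_radialDeriv_div_norm_le ha hC)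
  have hinv : IntegrableOn (fun z : ℂ => (‖z‖ ^ 2)⁻¹) (openAnnulus a b) :=
    integrableOn_openAnnulus_of_abs_le (by fun_prop) (abs_inv_norm_sq_le ha)
  have hsq : IntegrableOn (fun z => radialDeriv L z ^ 2) (openAnnulus a b) :=
    integrableOn_openAnnulus_of_abs_le ((measurable_radialDeriv L).pow_const 2) fun z hz => by
      rw [abs_pow]
      exact pow_le_pow_left₀ (abs_nonneg _) ((abs_radialDeriv_le L z).trans (hC z hz)) 2
  have hlog : 0 < log (b / a) := log_pos ((one_lt_div ha).2 hab)
  -- Cauchy–Schwarz: integrate `(radialDeriv L z - c / ‖z‖) ^ 2 ≥ 0` for the optimal `c`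
  set c := (β - α) / log (b / a)
  calc 2 * π * (β - α) ^ 2 / log (b / a)
      = 2 * c * (2 * π * (β - α)) - c ^ 2 * (2 * π * log (b / a)) := by
        simp only [c]; field_simp; ring
    _ = ∫ z in openAnnulus a b,
          (2 * c * (radialDeriv L z / ‖z‖) - c ^ 2 * (‖z‖ ^ 2)⁻¹) := by
        rw [integral_sub (hcross.const_mul _) (hinv.const_mul _), integral_const_mul,
          integral_const_mul, integral_radialDeriv_div_norm ha hab hL hα hβ,
          integral_inv_norm_sq_openAnnulus ha hab.le]
    _ ≤ ∫ z in openAnnulus a b, radialDeriv L z ^ 2 := by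
        refine setIntegral_mono_on ((hcross.const_mul _).sub (hinv.const_mul _)) hsq
          isOpen_openAnnulus.measurableSet fun z hz => ?_
        have hz0 : ‖z‖ ≠ 0 := (ha.trans hz.1).ne'
        have hsquare : radialDeriv L z ^ 2 -
            (2 * c * (radialDeriv L z / ‖z‖) - c ^ 2 * (‖z‖ ^ 2)⁻¹) =
            (radialDeriv L z - c / ‖z‖) ^ 2 := by
          field_simp
          ring
        linarith [sq_nonneg (radialDeriv L z - c / ‖z‖)]

end RadialDerivative

theorem stmt12_general (r R : ℝ) (hr : 1 < r) (h : ℂ → ℂ)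
    (A₁ A₂ : Set ℂ)
    (hA₁ : A₁ = {z : ℂ | 1 ≤ ‖z‖ ∧ ‖z‖ ≤ r})
    (hA₂ : A₂ = {w : ℂ | 1 ≤ ‖w‖ ∧ ‖w‖ ≤ R})
    (hC1 : ContDiffOn ℝ 1 h A₁)
    (hbij : Set.BijOn h A₁ A₂)
    (hb1 : ∀ z : ℂ, ‖z‖ = 1 → ‖h z‖ = 1)
    (hb2 : ∀ z : ℂ, ‖z‖ = r → ‖h z‖ = R) :
    2 * Real.pi * (Real.log R) ^ 2 / Real.log r
      ≤ ∫ z in A₁,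
          (fderiv ℝ (fun w => ‖h w‖) z (z / (‖z‖ : ℂ))) ^ 2
            / (‖h z‖) ^ 2 := by
  subst hA₁ hA₂
  change ContDiffOn ℝ 1 h (closedAnnulus 1 r) at hC1
  have hne : ∀ z ∈ closedAnnulus 1 r, ‖h z‖ ≠ 0 := fun z hz =>
    (one_pos.trans_le (hbij.mapsTo hz).1).ne'
  have hnorm : ContDiffOn ℝ 1 (fun w => ‖h w‖) (closedAnnulus 1 r) :=
    hC1.norm ℝ fun z hz => norm_ne_zero_iff.1 (hne z hz)
  have hradial : ∀ z ∈ openAnnulus 1 r,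
      fderiv ℝ (fun w => ‖h w‖) z (z / (‖z‖ : ℂ)) ^ 2 / ‖h z‖ ^ 2
        = radialDeriv (fun w => log ‖h w‖) z ^ 2 := fun z hz => by
    have hdiff : DifferentiableAt ℝ (fun w => ‖h w‖) z :=
      (hnorm.differentiableOn one_ne_zero).differentiableAt (Filter.mem_of_superset
        (isOpen_openAnnulus.mem_nhds hz) openAnnulus_subset_closedAnnulus)
    rw [radialDeriv,
      (hdiff.hasFDerivAt.log (hne z (openAnnulus_subset_closedAnnulus hz))).fderiv]
    simp only [smul_apply, smul_eq_mul]
    field_simp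
  calc 2 * π * log R ^ 2 / log r
      = 2 * π * (log R - log 1) ^ 2 / log (r / 1) := by rw [log_one, sub_zero, div_one]
    _ ≤ ∫ z in openAnnulus 1 r, radialDeriv (fun w => log ‖h w‖) z ^ 2 :=
        le_integral_radialDeriv_sq one_pos hr (hnorm.log hne) (fun z hz => by rw [hb1 z hz])
          (fun z hz => by rw [hb2 z hz])
    _ = _ := by
        rw [← setIntegral_congr_fun isOpen_openAnnulus.measurableSet hradial]
        exact (setIntegral_congr_set closedAnnulus_ae_eq_openAnnulus).symm

/-- For a C¹ homeomorphism `h` between the annuli `A₁ = {1 ≤ |z| ≤ r}` and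
`A₂ = {1 ≤ |w| ≤ R}` with `|h| = 1` on `|z| = 1` and `|h| = R` on `|z| = r`,
`∬_{A₁} (|h|_N)²/|h|² dz ≥ 2π (log R)²/log r`, where `|h|_N` is the normal
(radial) derivative of `|h|`, i.e. the derivative of `w ↦ |h w|` in the
direction `z/|z|`. -/
theorem stmt12 (r R : ℝ) (hr : 1 < r) (hR : 1 < R) (h : ℂ → ℂ)
    (A₁ A₂ : Set ℂ)
    (hA₁ : A₁ = {z : ℂ | 1 ≤ ‖z‖ ∧ ‖z‖ ≤ r})
    (hA₂ : A₂ = {w : ℂ | 1 ≤ ‖w‖ ∧ ‖w‖ ≤ R})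
    (hC1 : ContDiffOn ℝ 1 h A₁)
    (hbij : Set.BijOn h A₁ A₂)
    (hb1 : ∀ z : ℂ, ‖z‖ = 1 → ‖h z‖ = 1)
    (hb2 : ∀ z : ℂ, ‖z‖ = r → ‖h z‖ = R) :
    2 * Real.pi * (Real.log R) ^ 2 / Real.log r
      ≤ ∫ z in A₁,
          (fderiv ℝ (fun w => ‖h w‖) z (z / (‖z‖ : ℂ))) ^ 2
            / (‖h z‖) ^ 2 :=
  stmt12_general r R hr h A₁ A₂ hA₁ hA₂ hC1 hbij hb1 hb2
end

section
/- Let ρ : [1, r] → ℝ be positive and differentiable with ρ(1) = 1, and let a, b > 0, λ > 1, α with 1 + α/b² > 0. Suppose (a/ρ^(λ-1)) / √(b²/ρ^(2(λ-1)) + α) · ρ'(t) = ρ(t)/t for all t ∈ [1, r], and suppose the denominator (1 + √(1+α/b²))² - t^(2(λ-1)b/a)·α/b² is positive on [1, r]. Then ρ(t) = 2^(1/(λ-1)) (1 + √(1+α/b²))^(1/(λ-1)) t^(b/a) / [(1 + √(1+α/b²))² - t^(2(λ-1)b/a)·α/b²]^(1/(λ-1)) for all t ∈ [1, r]. -/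
/-!
Put `u = ρ ^ (λ - 1)`, `κ = α / b²` and `k = (λ - 1) b / a`. The equation becomes
`t u' = k u √(1 + κ u²)`. The substitution `v = u / (1 + √(1 + κ u²))` has
`v' / v = u' / (u √(1 + κ u²))`, so it turns this into `t v' = k v`; hence
`v = t ^ k / (1 + √(1 + κ))` by `ρ 1 = 1`, and `u = 2 v / (1 - κ v²)` recovers `ρ`.
-/

open Real Set

/-- For `κ = -1` and `x = sin θ` this is `tan (θ / 2)`. -/
noncomputable def halfTan (κ x : ℝ) : ℝ := x / (1 + √(1 + κ * x ^ 2))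

lemma hasDerivAt_halfTan {κ x : ℝ} (hx : 0 < 1 + κ * x ^ 2) :
    HasDerivAt (halfTan κ) (1 / (√(1 + κ * x ^ 2) * (1 + √(1 + κ * x ^ 2)))) x := by
  have hW := sqrt_pos.2 hx
  have hW2 := sq_sqrt hx.le
  have h := ((((hasDerivAt_pow 2 x).const_mul κ).const_add 1).sqrt hx.ne').const_add 1
  refine ((hasDerivAt_id' x).div h (by positivity)).congr_deriv ?_
  field_simp
  linear_combination 2 * hW2

lemma eq_of_halfTan_eq {κ x c T : ℝ} (hx : 0 ≤ 1 + κ * x ^ 2) (hc : c ≠ 0)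
    (hD : c ^ 2 - κ * T ^ 2 ≠ 0) (h : halfTan κ x = T / c) :
    x = 2 * c * T / (c ^ 2 - κ * T ^ 2) := by
  have hW2 := sq_sqrt hx
  have hW : 0 < 1 + √(1 + κ * x ^ 2) := by positivity
  rw [halfTan, div_eq_div_iff hW.ne' hc] at h
  rw [eq_div_iff hD]
  rcases eq_or_ne x 0 with rfl | hx0
  · simp_all
  · apply mul_left_cancel₀ hx0
    linear_combination (x * c + T * (1 + √(1 + κ * x ^ 2)) - 2 * T) * h + T ^ 2 * hW2

lemma halfTan_mul_rpow_neg_eq {κ k t₀ r : ℝ} {u : ℝ → ℝ} (ht₀ : 0 < t₀)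
    (hu : ∀ t ∈ Icc t₀ r,
      0 < 1 + κ * u t ^ 2 ∧ HasDerivAt u (k * u t * √(1 + κ * u t ^ 2) / t) t) :
    ∀ t ∈ Icc t₀ r, halfTan κ (u t) * t ^ (-k) = halfTan κ (u t₀) * t₀ ^ (-k) := by
  have hderiv : ∀ t ∈ Icc t₀ r, HasDerivAt (fun s ↦ halfTan κ (u s) * s ^ (-k)) 0 t := by
    intro t ht
    obtain ⟨hX, hu'⟩ := hu t ht
    have htpos : 0 < t := ht₀.trans_le ht.1
    have hW := sqrt_pos.2 hX
    refine (((hasDerivAt_halfTan hX).comp t hu').mul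
      (hasDerivAt_rpow_const (p := -k) (Or.inl htpos.ne'))).congr_deriv ?_
    rw [rpow_sub_one htpos.ne']
    simp only [Function.comp_apply, halfTan]
    field_simp
    ring
  exact constant_of_has_deriv_right_zero
    (fun t ht ↦ (hderiv t ht).continuousAt.continuousWithinAt)
    (fun t ht ↦ (hderiv t (Ico_subset_Icc_self ht)).hasDerivWithinAt)

lemma sqrt_div_rpow_add {b x m α : ℝ} (hb : 0 < b) (hx : 0 < x) :
    √(b ^ 2 / x ^ (2 * m) + α) = b / x ^ m * √(1 + α / b ^ 2 * (x ^ m) ^ 2) := by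
  have hxm := rpow_pos_of_pos hx m
  have h : b ^ 2 / x ^ (2 * m) + α = (b / x ^ m) ^ 2 * (1 + α / b ^ 2 * (x ^ m) ^ 2) := by
    rw [mul_comm, rpow_mul hx.le, rpow_two]
    field_simp
  rw [h, sqrt_mul (sq_nonneg _), sqrt_sq (by positivity)]

lemma hasDerivAt_rpow_of_ode {a b m α t : ℝ} {ρ : ℝ → ℝ} (ha : a ≠ 0) (hb : 0 < b)
    (ht : 0 < t) (hρ : 0 < ρ t) (hdiff : DifferentiableAt ℝ ρ t)
    (hode : a / ρ t ^ m / √(b ^ 2 / ρ t ^ (2 * m) + α) * deriv ρ t = ρ t / t) :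
    0 < 1 + α / b ^ 2 * (ρ t ^ m) ^ 2 ∧
      HasDerivAt (fun s ↦ ρ s ^ m)
        (m * b / a * ρ t ^ m * √(1 + α / b ^ 2 * (ρ t ^ m) ^ 2) / t) t := by
  rw [sqrt_div_rpow_add hb hρ] at hode
  have hρm := rpow_pos_of_pos hρ m
  have hW : 0 < √(1 + α / b ^ 2 * (ρ t ^ m) ^ 2) := by
    refine (sqrt_nonneg _).lt_of_ne fun hW ↦ (div_pos hρ ht).ne' ?_
    rw [← hode, ← hW]
    simp
  refine ⟨sqrt_pos.1 hW, ?_⟩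
  generalize √(1 + α / b ^ 2 * (ρ t ^ m) ^ 2) = W at hW hode ⊢
  have hρ' : deriv ρ t = b * W * ρ t / (a * t) := by
    field_simp at hode ⊢
    linear_combination hode
  refine (hdiff.hasDerivAt.rpow_const (p := m) (Or.inl hρ.ne')).congr_deriv ?_
  rw [hρ', rpow_sub_one hρ.ne']
  field_simp

theorem stmt16_general (a b lam α r : ℝ) (ha : 0 < a) (hb : 0 < b) (hlam : 1 < lam)
    (ρ : ℝ → ℝ) (hpos : ∀ t ∈ Set.Icc (1:ℝ) r, 0 < ρ t)
    (hdiff : ∀ t ∈ Set.Icc (1:ℝ) r, DifferentiableAt ℝ ρ t)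
    (hρ1 : ρ 1 = 1)
    (hode : ∀ t ∈ Set.Icc (1:ℝ) r,
      (a / (ρ t) ^ (lam - 1)) / Real.sqrt (b ^ 2 / (ρ t) ^ (2 * (lam - 1)) + α) * deriv ρ t
        = ρ t / t)
    (hden : ∀ t ∈ Set.Icc (1:ℝ) r,
      0 < (1 + Real.sqrt (1 + α / b ^ 2)) ^ 2 - t ^ (2 * (lam - 1) * b / a) * α / b ^ 2) :
    ∀ t ∈ Set.Icc (1:ℝ) r,
      ρ t = (2 : ℝ) ^ ((1 : ℝ) / (lam - 1)) *
        (1 + Real.sqrt (1 + α / b ^ 2)) ^ ((1 : ℝ) / (lam - 1)) * t ^ (b / a) /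
        ((1 + Real.sqrt (1 + α / b ^ 2)) ^ 2 - t ^ (2 * (lam - 1) * b / a) * α / b ^ 2)
          ^ ((1 : ℝ) / (lam - 1)) := by
  intro t ht
  have hm : 0 < lam - 1 := by linarith
  have htpos : 0 < t := one_pos.trans_le ht.1
  have hu := fun s hs ↦
    hasDerivAt_rpow_of_ode ha.ne' hb (one_pos.trans_le hs.1) (hpos s hs) (hdiff s hs) (hode s hs)
  have hconst := halfTan_mul_rpow_neg_eq one_pos hu t ht
  set κ := α / b ^ 2
  set c := 1 + √(1 + κ)
  set T := t ^ ((lam - 1) * b / a)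
  have hc : 0 < c := by positivity
  have hT1 : halfTan κ 1 = 1 / c := by simp [halfTan, c]
  rw [hρ1, one_rpow, one_rpow, mul_one, hT1, rpow_neg htpos.le,
    mul_inv_eq_iff_eq_mul₀ (by positivity)] at hconst
  have hT : halfTan κ (ρ t ^ (lam - 1)) = T / c := by
    rw [hconst]
    ring
  have hT2 : t ^ (2 * (lam - 1) * b / a) * α / b ^ 2 = κ * T ^ 2 := by
    rw [show 2 * (lam - 1) * b / a = (lam - 1) * b / a * 2 by ring, rpow_mul htpos.le, rpow_two]
    ring
  have hD := hden t ht
  rw [hT2] at hD ⊢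
  have hρm := eq_of_halfTan_eq (hu t ht).1.le hc.ne' hD.ne' hT
  rw [← rpow_rpow_inv (hpos t ht).le hm.ne', hρm, div_rpow (by positivity) hD.le,
    mul_rpow (by positivity) (by positivity), mul_rpow zero_le_two hc.le, ← rpow_mul htpos.le,
    one_div]
  field_simp

theorem stmt16 (a b lam α r : ℝ) (ha : 0 < a) (hb : 0 < b) (hlam : 1 < lam) (hr : 1 < r)
    (hα : 0 < 1 + α / b ^ 2)
    (ρ : ℝ → ℝ) (hpos : ∀ t ∈ Set.Icc (1:ℝ) r, 0 < ρ t)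
    (hdiff : ∀ t ∈ Set.Icc (1:ℝ) r, DifferentiableAt ℝ ρ t)
    (hρ1 : ρ 1 = 1)
    (hode : ∀ t ∈ Set.Icc (1:ℝ) r,
      (a / (ρ t) ^ (lam - 1)) / Real.sqrt (b ^ 2 / (ρ t) ^ (2 * (lam - 1)) + α) * deriv ρ t
        = ρ t / t)
    (hden : ∀ t ∈ Set.Icc (1:ℝ) r,
      0 < (1 + Real.sqrt (1 + α / b ^ 2)) ^ 2 - t ^ (2 * (lam - 1) * b / a) * α / b ^ 2) :
    ∀ t ∈ Set.Icc (1:ℝ) r,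
      ρ t = (2 : ℝ) ^ ((1 : ℝ) / (lam - 1)) *
        (1 + Real.sqrt (1 + α / b ^ 2)) ^ ((1 : ℝ) / (lam - 1)) * t ^ (b / a) /
        ((1 + Real.sqrt (1 + α / b ^ 2)) ^ 2 - t ^ (2 * (lam - 1) * b / a) * α / b ^ 2)
          ^ ((1 : ℝ) / (lam - 1)) :=
  stmt16_general a b lam α r ha hb hlam ρ hpos hdiff hρ1 hode hden
end

section
/- Let a, b > 0, λ > 1, R > 1, and let α ≥ -b²/R^(2(λ-1)). Define r by r = [R^(λ-1)(1 + √(1+α/b²)) / (1 + √(1 + R^(2λ-2)α/b²))]^((1/(λ-1))·(a/b)). Then R = 2^(1/(λ-1)) (1 + √(1+α/b²))^(1/(λ-1)) r^(b/a) / [(1 + √(1+α/b²))² - r^(2(λ-1)b/a)·α/b²]^(1/(λ-1)). -/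
/-!
Write `u = 1 + √(1 + α/b²)`, `t = √(1 + R^(2λ-2) α/b²)` and `K = R^(λ-1)`, so that the defining
relation reads `r^(b/a) = X^(1/(λ-1))` with `X = K u / (1 + t)`. Since `t² - 1 = K² α/b²`, the
denominator collapses: `u² - X² α/b² = 2u²/(1 + t)`. Hence the quantity inside the `1/(λ-1)`-th
power on the right-hand side is `2uX (1 + t) / (2u²) = K`, and `K^(1/(λ-1)) = R`.
-/

open Real

lemma sq_sub_sq_div_mul_eq {K u t β : ℝ} (ht : 1 + t ≠ 0) (htsq : t ^ 2 = 1 + K ^ 2 * β) :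
    u ^ 2 - (K * u / (1 + t)) ^ 2 * β = 2 * u ^ 2 / (1 + t) := by
  field_simp
  linear_combination u ^ 2 * htsq

lemma two_mul_mul_div_sq_sub_eq {K u t β : ℝ} (hu : u ≠ 0) (ht : 1 + t ≠ 0)
    (htsq : t ^ 2 = 1 + K ^ 2 * β) :
    2 * u * (K * u / (1 + t)) / (u ^ 2 - (K * u / (1 + t)) ^ 2 * β) = K := by
  rw [sq_sub_sq_div_mul_eq ht htsq]
  field_simp

lemma sq_sqrt_one_add_mul_div_sq {P α b : ℝ} (hP : 0 < P) (hb : b ≠ 0) (hα : -b ^ 2 / P ≤ α) :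
    √(1 + P * α / b ^ 2) ^ 2 = 1 + P * α / b ^ 2 := by
  refine sq_sqrt ?_
  have hPα : -b ^ 2 ≤ P * α := by rw [mul_comm]; exact (div_le_iff₀ hP).1 hα
  have : -1 ≤ P * α / b ^ 2 := (le_div_iff₀ (by positivity)).2 (by linarith)
  linarith

theorem stmt17 (a b lam R α r : ℝ) (ha : 0 < a) (hb : 0 < b) (hlam : 1 < lam) (hR : 1 < R)
    (hα : -b ^ 2 / R ^ (2 * (lam - 1)) ≤ α)
    (hrdef : r = (R ^ (lam - 1) * (1 + Real.sqrt (1 + α / b ^ 2)) /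
        (1 + Real.sqrt (1 + R ^ (2 * lam - 2) * α / b ^ 2))) ^ ((1 / (lam - 1)) * (a / b))) :
    R = (2 : ℝ) ^ ((1 : ℝ) / (lam - 1)) *
        (1 + Real.sqrt (1 + α / b ^ 2)) ^ ((1 : ℝ) / (lam - 1)) * r ^ (b / a) /
        ((1 + Real.sqrt (1 + α / b ^ 2)) ^ 2 - r ^ (2 * (lam - 1) * b / a) * α / b ^ 2)
          ^ ((1 : ℝ) / (lam - 1)) := by
  have hR0 : 0 < R := by linarith
  have hp : lam - 1 ≠ 0 := sub_ne_zero.2 hlam.ne'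
  rw [show 2 * lam - 2 = 2 * (lam - 1) by ring] at hrdef
  set u := 1 + √(1 + α / b ^ 2)
  set t := √(1 + R ^ (2 * (lam - 1)) * α / b ^ 2)
  set K := R ^ (lam - 1)
  set X := K * u / (1 + t)
  have hu : 0 < u := by positivity
  have ht : 0 < 1 + t := by positivity
  have hX : 0 < X := by positivity
  have htsq : t ^ 2 = 1 + K ^ 2 * (α / b ^ 2) := by
    rw [sq_sqrt_one_add_mul_div_sq (by positivity) hb.ne' hα, ← rpow_mul_natCast hR0.le]
    ring_nf
  have hr1 : r ^ (b / a) = X ^ (1 / (lam - 1)) := by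
    rw [hrdef, ← rpow_mul hX.le]
    congr 1
    field_simp
  have hr2 : r ^ (2 * (lam - 1) * b / a) = X ^ 2 := by
    rw [hrdef, ← rpow_mul hX.le, ← rpow_two X]
    congr 1
    field_simp
  rw [hr1, hr2, mul_div_assoc (X ^ 2), ← mul_rpow (by norm_num) hu.le,
    ← mul_rpow (by positivity) hX.le, ← div_rpow (by positivity) (by rw [sq_sub_sq_div_mul_eq ht.ne' htsq]; positivity),
    two_mul_mul_div_sq_sub_eq hu.ne' ht.ne' htsq, ← rpow_mul hR0.le, mul_one_div_cancel hp,
    rpow_one]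
end
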